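/- Let G = (X, w) be a dissimilarity network with nonnegative weights and |X| = n ≥ 3, and let x ∈ X. For a network H on a vertex set V with |V| = m and for an integer k with 1 ≤ k ≤ m − 1, define the k-th merge value d_k(H) = inf{δ ≥ 0 : the number of δ-connectivity classes of H is at most m − k} (this infimum is over a nonempty set, since at δ ≥ max w all vertices are δ-connected). Then for every integer k with 1 ≤ k ≤ n − 2, the k-th merge value of the subnetwork f(G, x) (which has n − 1 vertices) satisfies d_k(f(G, x)) ≥ d_k(G). That is, the sorted sequence of death values of the zero-dimensional persistence barcodes can only increase, term by term, when the node x is deleted from the network. -/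

import Mathlib

/-- The Dowker sink complex of the network on vertex set `V ⊆ X` with weight function `w`
(restricted to `V`) at resolution `δ`. -/
def DowkerSinkOn {X : Type*} (V : Set X) (w : X → X → ℝ) (δ : ℝ) : Set (Finset X) :=
  {σ | σ.Nonempty ∧ ↑σ ⊆ V ∧ ∃ p ∈ V, ∀ y ∈ σ, w y p ≤ δ}

/-- `y` and `z` are `δ`-connected in the network on vertex set `V`. -/
def DeltaConnectedOn {X : Type*} [DecidableEq X] (V : Set X) (w : X → X → ℝ) (δ : ℝ) :
    X → X → Prop :=
  Relation.ReflTransGen (fun a b => ({a, b} : Finset X) ∈ DowkerSinkOn V w δ)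

lemma deltaConnectedOn_mono_univ {X : Type*} [DecidableEq X] {V : Set X} {w : X → X → ℝ}
    {δ : ℝ} {a b : X} (h : DeltaConnectedOn V w δ a b) :
    DeltaConnectedOn (Set.univ : Set X) w δ a b := by
  refine Relation.ReflTransGen.mono (fun p q hpq => ?_) _ _ h
  obtain ⟨hne, _, pt, _, hw⟩ := hpq
  exact ⟨hne, by simp, pt, trivial, hw⟩

/-- Let `G = (X, w)` be a dissimilarity network with nonnegative weights and
`n = |X| ≥ 3` vertices, and let `x ∈ X`. For `1 ≤ k ≤ n - 2`, the `k`-th merge value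
`d_k(H) = inf {δ ≥ 0 : the number of δ-connectivity classes of H is at most m - k}`
(where `m` is the number of vertices of `H`) satisfies `d_k(f(G, x)) ≥ d_k(G)`: the sorted
death values of the 0-dimensional persistence barcodes can only increase, term by term,
when the node `x` is deleted. -/
theorem merge_values_le_of_delete {X : Type*} [Fintype X] [DecidableEq X]
    (w : X → X → ℝ) (hdis : ∀ a b : X, w a b = 0 ↔ a = b)
    (hnn : ∀ a b : X, 0 ≤ w a b)
    (hn : 3 ≤ Fintype.card X) (x : X)
    (k : ℕ) (hk1 : 1 ≤ k) (hk2 : k ≤ Fintype.card X - 2) :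
    sInf {δ : ℝ | 0 ≤ δ ∧
        Nat.card (Quot (DeltaConnectedOn (Set.univ : Set X) w δ)) ≤ Fintype.card X - k} ≤
      sInf {δ : ℝ | 0 ≤ δ ∧
        Nat.card (Quot (fun a b : {y : X // y ≠ x} =>
          DeltaConnectedOn {y : X | y ≠ x} w δ a.1 b.1)) ≤ (Fintype.card X - 1) - k} := by
  set n := Fintype.card X with hncard
  apply csInf_le_csInf
  · exact ⟨0, fun δ hδ => hδ.1⟩
  · -- second set is nonempty; take δ = max weight
    obtain ⟨M, hM⟩ := Finite.exists_le (fun p : X × X => w p.1 p.2)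
    have hM0 : (0:ℝ) ≤ M := le_trans (hnn x x) (hM (x, x))
    refine ⟨M, hM0, ?_⟩
    have hsub : Subsingleton (Quot (fun a b : {y : X // y ≠ x} =>
        DeltaConnectedOn {y : X | y ≠ x} w M a.1 b.1)) := by
      constructor
      intro q1 q2
      induction q1 using Quot.ind with
      | _ a =>
        induction q2 using Quot.ind with
        | _ b =>
          apply Quot.sound
          apply Relation.ReflTransGen.single
          refine ⟨⟨a.1, by simp⟩, ?_, b.1, b.2, ?_⟩
          · intro y hy
            simp only [Finset.coe_insert, Finset.coe_singleton, Set.mem_insert_iff,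
              Set.mem_singleton_iff] at hy
            rcases hy with h | h
            · exact h ▸ a.2
            · exact h ▸ b.2
          · intro y hy
            exact hM (y, b.1)
    have h1 : Nat.card (Quot (fun a b : {y : X // y ≠ x} =>
        DeltaConnectedOn {y : X | y ≠ x} w M a.1 b.1)) ≤ 1 := by
      rcases isEmpty_or_nonempty (Quot (fun a b : {y : X // y ≠ x} =>
          DeltaConnectedOn {y : X | y ≠ x} w M a.1 b.1)) with he | hne
      · simp [Nat.card_of_isEmpty]
      · exact le_of_eq (Nat.card_eq_one_iff_unique.mpr ⟨hsub, hne⟩)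
    omega
  · -- second set ⊆ first set
    rintro δ ⟨hδ0, hδcard⟩
    refine ⟨hδ0, ?_⟩
    set r := (fun a b : {y : X // y ≠ x} => DeltaConnectedOn {y : X | y ≠ x} w δ a.1 b.1)
    set R := DeltaConnectedOn (Set.univ : Set X) w δ
    haveI : Finite (Quot R) := Finite.of_surjective (Quot.mk R) (Quot.mk_surjective)
    haveI : Finite (Quot r) := Finite.of_surjective (Quot.mk r) (Quot.mk_surjective)
    have hsurj : Function.Surjective (fun q : Quot r ⊕ Unit =>
        Sum.elim (Quot.lift (fun a : {y : X // y ≠ x} => Quot.mk R a.1)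
          (fun a b hab => Quot.sound (deltaConnectedOn_mono_univ hab)))
          (fun _ => Quot.mk R x) q) := by
      intro q
      induction q using Quot.ind with
      | _ y =>
        by_cases hy : y = x
        · exact ⟨Sum.inr (), by simp [hy]⟩
        · exact ⟨Sum.inl (Quot.mk r ⟨y, hy⟩), rfl⟩
    have hcard : Nat.card (Quot R) ≤ Nat.card (Quot r ⊕ Unit) :=
      Nat.card_le_card_of_surjective _ hsurj
    rw [Nat.card_sum] at hcard
    simp only [Nat.card_unique] at hcard
    omega
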